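/- If w is a substring of T that occurs at least twice in T, then the inner contraction obtained by removing the first and last character, T[i+1..j-1] for any occurrence T[i..j] of w, also occurs at least twice in T (or is empty). Consequently, every unique palindromic substring of T contains a MUPS as a contraction. -/

import Mathlib

/-- The substring T[i..j] of T (1-indexed, inclusive). -/
def sub (T : List Char) (i j : ℕ) : List Char := (T.drop (i-1)).take (j+1-i)

/-- A string is a palindrome if it equals its reversal. -/
def IsPal (w : List Char) : Prop := w.reverse = w

/-- p is a period of w: 0 < p ≤ |w| and w[k] = w[k+p] for all valid k (0-indexed). -/
def HasPeriod (w : List Char) (p : ℕ) : Prop :=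
  0 < p ∧ p ≤ w.length ∧ ∀ k, k + p < w.length → w[k]? = w[k + p]?

/-- u occurs in T at (1-indexed) position i. -/
def OccursAt (u T : List Char) (i : ℕ) : Prop :=
  1 ≤ i ∧ i + u.length - 1 ≤ T.length ∧ sub T i (i + u.length - 1) = u

/-- u is unique in T: nonempty and occurs at exactly one position. -/
def UniqueIn (u T : List Char) : Prop := u ≠ [] ∧ ∃! i, OccursAt u T i

/-- u occurs at least twice in T. -/
def OccursTwice (u T : List Char) : Prop := ∃ i j, i ≠ j ∧ OccursAt u T i ∧ OccursAt u T j

/-- T[i..j] is a (nonempty, in-bounds) palindromic substring of T. -/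
def IsPalSub (T : List Char) (i j : ℕ) : Prop :=
  1 ≤ i ∧ i ≤ j ∧ j ≤ T.length ∧ IsPal (sub T i j)

/-- T[i..j] is a shortest unique palindromic substring of T for the interval [p,q]. -/
def IsSUPS (T : List Char) (p q i j : ℕ) : Prop :=
  IsPalSub T i j ∧ UniqueIn (sub T i j) T ∧ i ≤ p ∧ q ≤ j ∧
  ∀ i' j', IsPalSub T i' j' → UniqueIn (sub T i' j') T → i' ≤ p → q ≤ j' →
    j + 1 - i ≤ j' + 1 - i'

/-- T[i..j] is a minimal unique palindromic substring of T. -/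
def IsMUPS (T : List Char) (i j : ℕ) : Prop :=
  IsPalSub T i j ∧ UniqueIn (sub T i j) T ∧ ¬ UniqueIn (sub T (i+1) (j-1)) T

lemma tail_take' (l : List Char) (n : ℕ) : (l.take n).tail = l.tail.take (n-1) := by
  cases l <;> cases n <;> simp

lemma sub_length (T : List Char) {i j : ℕ} (h1 : 1 ≤ i) (h3 : j ≤ T.length) :
    (sub T i j).length = j + 1 - i := by
  simp only [sub, List.length_take, List.length_drop]; omega

lemma inner_sub (T : List Char) {i j : ℕ} (h1 : 1 ≤ i) (h2 : i ≤ j) (h3 : j ≤ T.length) :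
    sub T (i+1) (j-1) = (sub T i j).tail.dropLast := by
  unfold sub
  rw [tail_take', List.tail_drop, List.dropLast_eq_take, List.take_take,
    List.length_take, List.length_drop]
  congr 1
  · omega
  · congr 1; omega

lemma occ_shift {w T : List Char} {p : ℕ} (h : OccursAt w T p) (hw : 2 ≤ w.length) :
    OccursAt (w.tail.dropLast) T (p+1) := by
  obtain ⟨hp, hb, hs⟩ := h
  have hlen : w.tail.dropLast.length = w.length - 2 := by
    simp only [List.length_dropLast, List.length_tail]; omega
  have key := inner_sub T (i := p) (j := p + w.length - 1) hp (by omega) hb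
  rw [hs] at key
  refine ⟨by omega, by omega, ?_⟩
  rw [hlen]
  have : p + 1 + (w.length - 2) - 1 = p + w.length - 1 - 1 := by omega
  rw [this, key]

lemma pal_inner {w : List Char} (h : IsPal w) : IsPal w.tail.dropLast := by
  unfold IsPal at *
  have h1 : ∀ l : List Char, (l.dropLast).reverse = l.reverse.tail := by
    intro l; rw [List.tail_reverse]
  have h2 : ∀ l : List Char, (l.tail).reverse = l.reverse.dropLast := by
    intro l
    have := List.tail_reverse (l := l.reverse)
    rw [List.reverse_reverse] at this
    rw [this, List.reverse_reverse]
  rw [h1, h2, h]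
  -- goal: w.dropLast.tail = w.tail.dropLast
  rcases w with _ | ⟨a, _ | ⟨b, t⟩⟩ <;> simp

lemma part_a (T : List Char) : ∀ i j, 1 ≤ i → i ≤ j → j ≤ T.length → OccursTwice (sub T i j) T →
      j - 1 < i + 1 ∨ OccursTwice (sub T (i+1) (j-1)) T := by
  intro i j h1 h2 h3 ⟨p, q, hpq, hp, hq⟩
  by_cases hc : j - 1 < i + 1
  · exact Or.inl hc
  · right
    have hw : 2 ≤ (sub T i j).length := by rw [sub_length T h1 h3]; omega
    refine ⟨p+1, q+1, by omega, ?_, ?_⟩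
    · rw [inner_sub T h1 h2 h3]; exact occ_shift hp hw
    · rw [inner_sub T h1 h2 h3]; exact occ_shift hq hw

lemma part_b (T : List Char) : ∀ n i j, j - i ≤ n → IsPalSub T i j → UniqueIn (sub T i j) T →
      ∃ ℓ, IsMUPS T (i + ℓ) (j - ℓ) := by
  intro n
  induction n with
  | zero =>
    intro i j hn hps hu
    -- j = i, inner is empty so not unique
    refine ⟨0, by simpa using hps, by simpa using hu, ?_⟩
    intro ⟨hne, _⟩
    apply hne
    obtain ⟨h1, h2, h3, _⟩ := hps
    have : (sub T (i+0+1) (j-0-1)).length = 0 := by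
      simp only [sub, List.length_take, List.length_drop]; omega
    exact List.eq_nil_of_length_eq_zero this
  | succ n ih =>
    intro i j hn hps hu
    by_cases hin : UniqueIn (sub T (i+1) (j-1)) T
    · -- recurse
      obtain ⟨h1, h2, h3, hpal⟩ := hps
      have hne := hin.1
      have hlen : (sub T (i+1) (j-1)).length ≠ 0 := fun h => hne (List.eq_nil_of_length_eq_zero h)
      have hge : i + 2 ≤ j := by
        by_contra hc
        apply hlen
        simp only [sub, List.length_take, List.length_drop]; omega
      have hps' : IsPalSub T (i+1) (j-1) := by
        refine ⟨by omega, by omega, by omega, ?_⟩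
        rw [inner_sub T h1 h2 h3]
        exact pal_inner hpal
      obtain ⟨ℓ, hℓ⟩ := ih (i+1) (j-1) (by omega) hps' hin
      refine ⟨ℓ+1, ?_⟩
      have e1 : i + (ℓ+1) = i + 1 + ℓ := by omega
      have e2 : j - (ℓ+1) = j - 1 - ℓ := by omega
      rw [e1, e2]; exact hℓ
    · exact ⟨0, by simpa using hps, by simpa using hu, by simpa using hin⟩

/-- (a) If a substring occurs at least twice, so does its inner contraction
(or it is empty). (b) Consequently, every unique palindromic substring of T
contains a MUPS as a contraction. -/
theorem inner_contraction_and_mups (T : List Char) :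
    (∀ i j, 1 ≤ i → i ≤ j → j ≤ T.length → OccursTwice (sub T i j) T →
      j - 1 < i + 1 ∨ OccursTwice (sub T (i+1) (j-1)) T) ∧
    (∀ i j, IsPalSub T i j → UniqueIn (sub T i j) T →
      ∃ ℓ, IsMUPS T (i + ℓ) (j - ℓ)) := by
  exact ⟨part_a T, fun i j h1 h2 => part_b T (j - i) i j le_rfl h1 h2⟩
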